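/- arXiv:1508.00158 — 4 statements merged into one kernel-verified Lean document; each statement's English description precedes it below -/
import Mathlib

section
/- A regular graph G is interval colorable if and only if its chromatic index equals its maximum degree, i.e., χ'(G) = Δ(G). -/
open SimpleGraph

/-- A proper edge-coloring: edges sharing a vertex get distinct colors. -/
def EProper {V : Type*} (G : SimpleGraph V) (c : Sym2 V → ℕ) : Prop :=
  ∀ v a b, G.Adj v a → G.Adj v b → a ≠ b → c s(v, a) ≠ c s(v, b)

/-- The spectrum of a vertex: set of colors on incident edges. -/
def specS {V : Type*} (G : SimpleGraph V) (c : Sym2 V → ℕ) (v : V) : Set ℕ :=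
  {k | ∃ u, G.Adj v u ∧ c s(v, u) = k}

/-- An interval t-coloring: proper, uses exactly the colors 1..t, and each
vertex's spectrum is an interval of integers. -/
def IsIntCol {V : Type*} (G : SimpleGraph V) (c : Sym2 V → ℕ) (t : ℕ) : Prop :=
  EProper G c ∧
  (∀ e ∈ G.edgeSet, 1 ≤ c e ∧ c e ≤ t) ∧
  (∀ k, 1 ≤ k → k ≤ t → ∃ e ∈ G.edgeSet, c e = k) ∧
  (∀ v, ∀ a ∈ specS G c v, ∀ b ∈ specS G c v,
     ∀ k, a ≤ k → k ≤ b → k ∈ specS G c v)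

/-- Interval colorability. -/
def IntColorable {V : Type*} (G : SimpleGraph V) : Prop :=
  ∃ t c, IsIntCol G c t

/-- Least t admitting an interval t-coloring. -/
noncomputable def wInt {V : Type*} (G : SimpleGraph V) : ℕ :=
  sInf {t | ∃ c, IsIntCol G c t}

/-- Greatest t admitting an interval t-coloring. -/
noncomputable def WInt {V : Type*} (G : SimpleGraph V) : ℕ :=
  sSup {t | ∃ c, IsIntCol G c t}

/-- The set of values `max S(v,c)` over vertices v. -/
def maxSpecSet {V : Type*} (G : SimpleGraph V) (c : Sym2 V → ℕ) : Set ℕ :=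
  {m | ∃ v, sSup (specS G c v) = m}

/-- The sorted sequence of largest incident colors is continuous: every integer
between its minimum and maximum is attained. -/
def MaxSpecContinuous {V : Type*} (G : SimpleGraph V) (c : Sym2 V → ℕ) : Prop :=
  ∀ k, sInf (maxSpecSet G c) ≤ k → k ≤ sSup (maxSpecSet G c) → k ∈ maxSpecSet G c

/-- The composition (lexicographic product) G[H]. -/
def lexComp {V W : Type*} (G : SimpleGraph V) (H : SimpleGraph W) :
    SimpleGraph (V × W) where
  Adj a b := G.Adj a.1 b.1 ∨ (a.1 = b.1 ∧ H.Adj a.2 b.2)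
  symm := by
    constructor
    intro a b h
    rcases h with h | ⟨h1, h2⟩
    · exact Or.inl h.symm
    · exact Or.inr ⟨h1.symm, h2.symm⟩
  loopless := by
    constructor
    intro a h
    rcases h with h | ⟨_, h2⟩
    · exact G.irrefl h
    · exact H.irrefl h2

/-- The chromatic index: least number of colors in a proper edge-coloring. -/
noncomputable def chromIndex {V : Type*} (G : SimpleGraph V) : ℕ :=
  sInf {k | ∃ c, EProper G c ∧ ∀ e ∈ G.edgeSet, c e < k}

/-!
At a vertex `v` the colours of an interval coloring form an interval of `deg v ≤ Δ` integers,
so they stay distinct modulo `Δ`: reducing modulo `Δ` gives a proper edge-coloring with `Δ`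
colours, hence `χ' = Δ` for every interval colorable graph. Conversely, in an `r`-regular graph
a proper edge-coloring with colours `0, …, r - 1` uses every colour at every vertex, so adding
one to it gives an interval `r`-coloring.
-/

section EdgeColoring

variable {V : Type*} {G : SimpleGraph V} {c : Sym2 V → ℕ}

lemma specS_eq_coe_image [G.LocallyFinite] (v : V) :
    specS G c v = ↑((G.neighborFinset v).image fun u => c s(v, u)) := by
  ext k
  simp [specS]

lemma EProper.card_image_neighborFinset (hc : EProper G c) [G.LocallyFinite] (v : V) :
    ((G.neighborFinset v).image fun u => c s(v, u)).card = G.degree v := by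
  rw [Finset.card_image_of_injOn, card_neighborFinset_eq_degree]
  intro a ha b hb hab
  by_contra hne
  exact hc v a b ((G.mem_neighborFinset _ _).mp ha) ((G.mem_neighborFinset _ _).mp hb) hne hab

lemma image_neighborFinset_subset_range {k : ℕ} (hlt : ∀ e ∈ G.edgeSet, c e < k)
    [G.LocallyFinite] (v : V) :
    ((G.neighborFinset v).image fun u => c s(v, u)) ⊆ Finset.range k := by
  intro x hx
  obtain ⟨u, hu, rfl⟩ := Finset.mem_image.mp hx
  exact Finset.mem_range.mpr (hlt _ ((G.mem_neighborFinset _ _).mp hu))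

lemma EProper.degree_le {k : ℕ} (hc : EProper G c) (hlt : ∀ e ∈ G.edgeSet, c e < k)
    [G.LocallyFinite] (v : V) : G.degree v ≤ k := by
  simpa [hc.card_image_neighborFinset] using
    Finset.card_le_card (image_neighborFinset_subset_range hlt v)

lemma EProper.image_neighborFinset_eq_range [G.LocallyFinite] (hc : EProper G c) (v : V)
    (hlt : ∀ e ∈ G.edgeSet, c e < G.degree v) :
    ((G.neighborFinset v).image fun u => c s(v, u)) = Finset.range (G.degree v) :=
  Finset.eq_of_subset_of_card_le (image_neighborFinset_subset_range hlt v)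
    (by rw [hc.card_image_neighborFinset, Finset.card_range])

lemma chromIndex_le {k : ℕ} (hc : EProper G c) (hlt : ∀ e ∈ G.edgeSet, c e < k) :
    chromIndex G ≤ k :=
  Nat.sInf_le ⟨c, hc, hlt⟩

lemma exists_eProper_lt_chromIndex [Finite V] :
    ∃ c, EProper G c ∧ ∀ e ∈ G.edgeSet, c e < chromIndex G := by
  classical
  have : Fintype V := Fintype.ofFinite V
  let f := Fintype.equivFin (Sym2 V)
  have hf : EProper G fun e => f e := fun v a b _ _ hne hab =>
    hne (Sym2.congr_right.mp (f.injective (Fin.ext hab)))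
  exact Nat.sInf_mem (s := {k | ∃ c, EProper G c ∧ ∀ e ∈ G.edgeSet, c e < k})
    ⟨_, fun e => f e, hf, fun e _ => (f e).isLt⟩

lemma maxDegree_le_chromIndex [Fintype V] [DecidableRel G.Adj] : G.maxDegree ≤ chromIndex G := by
  obtain ⟨c, hc, hlt⟩ := exists_eProper_lt_chromIndex (G := G)
  exact G.maxDegree_le_of_forall_degree_le _ (hc.degree_le hlt)

end EdgeColoring

section IntervalColoring

variable {V : Type*} {G : SimpleGraph V} {c : Sym2 V → ℕ} {t : ℕ}

lemma IsIntCol.sub_lt_degree (hc : IsIntCol G c t) [G.LocallyFinite] {v : V} {z w : ℕ}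
    (hz : z ∈ specS G c v) (hw : w ∈ specS G c v) : w - z < G.degree v := by
  have hpos : 0 < G.degree v := by
    obtain ⟨u, hu, -⟩ := hz
    exact G.degree_pos_iff_exists_adj v |>.mpr ⟨u, hu⟩
  have hsub : Finset.Icc z w ⊆ (G.neighborFinset v).image fun u => c s(v, u) := by
    intro k hk
    obtain ⟨-, -, -, hinterval⟩ := hc
    rw [← Finset.mem_coe, ← specS_eq_coe_image]
    exact hinterval v z hz w hw k (Finset.mem_Icc.mp hk).1 (Finset.mem_Icc.mp hk).2
  have := Finset.card_le_card hsub
  rw [Nat.card_Icc, hc.1.card_image_neighborFinset] at this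
  omega

lemma IsIntCol.eProper_mod (hc : IsIntCol G c t) {r : ℕ} [G.LocallyFinite]
    (hdeg : ∀ v, G.degree v ≤ r) : EProper G fun e => c e % r := by
  have key : ∀ v z w, z ∈ specS G c v → w ∈ specS G c v → z < w → z % r ≠ w % r := by
    intro v z w hz hw hzw hmod
    have hdvd : r ∣ w - z := (Nat.modEq_iff_dvd' hzw.le).mp hmod
    have := Nat.le_of_dvd (Nat.sub_pos_of_lt hzw) hdvd
    have := hc.sub_lt_degree hz hw
    have := hdeg v
    omega
  intro v a b ha hb hne
  have hspec_a : c s(v, a) ∈ specS G c v := ⟨a, ha, rfl⟩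
  have hspec_b : c s(v, b) ∈ specS G c v := ⟨b, hb, rfl⟩
  rcases (hc.1 v a b ha hb hne).lt_or_gt with h | h
  · exact key v _ _ hspec_a hspec_b h
  · exact (key v _ _ hspec_b hspec_a h).symm

lemma IntColorable.chromIndex_eq_maxDegree [Fintype V] [DecidableRel G.Adj]
    (h : IntColorable G) : chromIndex G = G.maxDegree := by
  obtain ⟨t, c, hc⟩ := h
  refine le_antisymm (chromIndex_le (hc.eProper_mod G.degree_le_maxDegree) ?_)
    maxDegree_le_chromIndex
  intro e he
  induction e using Sym2.ind with
  | _ u w =>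
    have hpos : 0 < G.degree u := G.degree_pos_iff_exists_adj u |>.mpr ⟨w, he⟩
    exact Nat.mod_lt _ (hpos.trans_le (G.degree_le_maxDegree u))

lemma isIntCol_of_isEmpty [IsEmpty V] : IsIntCol G c 0 :=
  ⟨fun v => isEmptyElim v, fun e _ => isEmptyElim e.out.1, fun _ _ _ => by omega,
    fun v => isEmptyElim v⟩

lemma EProper.isIntCol_succ [Nonempty V] [G.LocallyFinite] {r : ℕ}
    (hc : EProper G c) (hreg : G.IsRegularOfDegree r) (hlt : ∀ e ∈ G.edgeSet, c e < r) :
    IsIntCol G (fun e => c e + 1) r := by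
  have hspec : ∀ v, specS G c v = Set.Iio r := by
    intro v
    have hlt_v : ∀ e ∈ G.edgeSet, c e < G.degree v := by rwa [hreg v]
    rw [specS_eq_coe_image, hc.image_neighborFinset_eq_range v hlt_v, hreg v]
    simp
  have hmem : ∀ v k, k ∈ specS G (fun e => c e + 1) v ↔ 1 ≤ k ∧ k ≤ r := by
    intro v k
    constructor
    · rintro ⟨u, hu, rfl⟩
      exact ⟨Nat.le_add_left _ _, hlt _ hu⟩
    · intro hk
      have : k - 1 ∈ specS G c v := by
        rw [hspec]
        exact Set.mem_Iio.mpr (by omega)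
      obtain ⟨u, hu, hcu⟩ := this
      exact ⟨u, hu, by simp only; omega⟩
  refine ⟨fun v a b ha hb hne h => hc v a b ha hb hne (Nat.succ.inj h),
    fun e he => ⟨Nat.le_add_left _ _, hlt e he⟩, fun k h1 h2 => ?_,
    fun v a ha b hb k hak hkb => (hmem v k).2 ⟨((hmem v a).1 ha).1.trans hak,
      hkb.trans ((hmem v b).1 hb).2⟩⟩
  obtain ⟨v⟩ := ‹Nonempty V›
  obtain ⟨u, hu, hk⟩ := (hmem v k).2 ⟨h1, h2⟩
  exact ⟨s(v, u), hu, hk⟩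

end IntervalColoring

/-- A regular graph is interval colorable iff χ'(G) = Δ(G). -/
theorem stmt1 {V : Type*} [Fintype V] (G : SimpleGraph V) [DecidableRel G.Adj]
    (r : ℕ) (hreg : G.IsRegularOfDegree r) :
    IntColorable G ↔ chromIndex G = G.maxDegree := by
  refine ⟨IntColorable.chromIndex_eq_maxDegree, fun h => ?_⟩
  rcases isEmpty_or_nonempty V with _ | _
  · exact ⟨0, fun _ => 0, isIntCol_of_isEmpty⟩
  obtain ⟨c, hc, hlt⟩ := exists_eProper_lt_chromIndex (G := G)
  rw [h, hreg.maxDegree_eq] at hlt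
  exact ⟨r, _, hc.isIntCol_succ hreg hlt⟩
end

section
/- If G is interval colorable, then for any positive integer n the composition G[\overline{K_n}] of G with the empty graph on n vertices is interval colorable; moreover, if G has an interval t-coloring then G[\overline{K_n}] has an interval (t·n)-coloring. -/
open SimpleGraph

/-! Each color `m` of `G` is blown up into the block of `n` consecutive colors
`(m - 1) n + 1, …, m n`, and the edge `(u, i)(v, j)` of `G[K̄ₙ]` gets the color of block
`c(uv)` at offset `i + j mod n`. For fixed `(u, i)` and neighbour `v` the offsets run over all
of `Fin n` exactly once, so the spectrum of `(u, i)` is the union of the blocks of the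
colors in the spectrum of `u`; a union of consecutive blocks is an interval. -/

section BlowUp

variable {V W : Type*} {G : SimpleGraph V}

@[simp]
theorem lexComp_bot_adj (a b : V × W) :
    (lexComp G (⊥ : SimpleGraph W)).Adj a b ↔ G.Adj a.1 b.1 := by
  simp [lexComp]

def blockColor (n m r : ℕ) : ℕ :=
  (m - 1) * n + r + 1

def blockIndex (n k : ℕ) : ℕ :=
  (k - 1) / n + 1

variable {n m r k t : ℕ}

theorem blockIndex_blockColor (hm : 1 ≤ m) (hr : r < n) :
    blockIndex n (blockColor n m r) = m := by
  have hn : 0 < n := by omega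
  rw [blockIndex, blockColor, Nat.add_sub_cancel, Nat.add_comm _ r, Nat.add_mul_div_right _ _ hn,
    Nat.div_eq_of_lt hr]
  omega

theorem blockColor_blockIndex (hk : 1 ≤ k) :
    blockColor n (blockIndex n k) ((k - 1) % n) = k := by
  rw [blockColor, blockIndex, Nat.add_sub_cancel, Nat.div_add_mod']
  omega

theorem blockIndex_mono : Monotone (blockIndex n) :=
  fun _ _ h => Nat.add_le_add_right (Nat.div_le_div_right (Nat.sub_le_sub_right h 1)) 1

theorem blockColor_le_mul (hm : 1 ≤ m) (hr : r < n) : blockColor n m r ≤ m * n := by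
  have : (m - 1) * n + n = m * n := by
    rw [← Nat.succ_mul, Nat.succ_eq_add_one, Nat.sub_add_cancel hm]
  rw [blockColor]
  omega

theorem blockIndex_le_of_le_mul (hk : 1 ≤ k) (hkt : k ≤ t * n) : blockIndex n k ≤ t := by
  have hn : 0 < n := Nat.pos_of_ne_zero (by rintro rfl; omega)
  exact (Nat.div_lt_iff_lt_mul hn).mpr (by omega)

variable (n) in
def blowUp (c : Sym2 V → ℕ) : Sym2 (V × Fin n) → ℕ :=
  Sym2.lift ⟨fun a b => blockColor n (c s(a.1, b.1)) (a.2 + b.2).val, fun a b => by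
    dsimp only
    rw [Sym2.eq_swap (a := a.1), add_comm a.2 b.2]⟩

@[simp]
theorem blowUp_mk (c : Sym2 V → ℕ) (a b : V × Fin n) :
    blowUp n c s(a, b) = blockColor n (c s(a.1, b.1)) (a.2 + b.2).val :=
  rfl

variable {c : Sym2 V → ℕ}

theorem specS_blowUp (hc : ∀ e ∈ G.edgeSet, 1 ≤ c e) (u : V) (i : Fin n) :
    k ∈ specS (lexComp G ⊥) (blowUp n c) (u, i) ↔ 1 ≤ k ∧ blockIndex n k ∈ specS G c u := by
  have : NeZero n := NeZero.of_pos i.pos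
  constructor
  · rintro ⟨⟨v, j⟩, huv, rfl⟩
    rw [lexComp_bot_adj] at huv
    exact ⟨Nat.le_add_left 1 _, v, huv,
      (blockIndex_blockColor (hc _ huv) (i + j).isLt).symm⟩
  · rintro ⟨hk, v, huv, hcuv⟩
    let r : Fin n := ⟨(k - 1) % n, Nat.mod_lt _ i.pos⟩
    refine ⟨(v, r - i), (lexComp_bot_adj _ _).mpr huv, ?_⟩
    rw [blowUp_mk, add_sub_cancel, hcuv]
    exact blockColor_blockIndex hk

theorem EProper.blowUp (hc : EProper G c) (hpos : ∀ e ∈ G.edgeSet, 1 ≤ c e) :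
    EProper (lexComp G ⊥) (blowUp n c) := by
  rintro ⟨u, i⟩ ⟨x, j⟩ ⟨y, l⟩ hux huy hne hcol
  rw [lexComp_bot_adj] at hux huy
  simp only [blowUp_mk] at hcol
  have hxy : x = y := by
    by_contra hxy
    apply hc u x y hux huy hxy
    rw [← blockIndex_blockColor (hpos _ hux) (i + j).isLt, hcol,
      blockIndex_blockColor (hpos _ huy) (i + l).isLt]
  subst hxy
  have hjl : (i + j).val = (i + l).val := by
    simp only [blockColor] at hcol
    omega
  exact hne (by rw [add_left_cancel (Fin.val_injective hjl)])

theorem IsIntCol.blowUp (hc : IsIntCol G c t) :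
    IsIntCol (lexComp G ⊥) (blowUp n c) (t * n) := by
  obtain ⟨hproper, hrange, hsurj, hint⟩ := hc
  have hpos : ∀ e ∈ G.edgeSet, 1 ≤ c e := fun e he => (hrange e he).1
  refine ⟨hproper.blowUp hpos, ?_, ?_, ?_⟩
  · intro e he
    induction e using Sym2.ind with
    | _ a b =>
      obtain ⟨h1, ht⟩ := hrange s(a.1, b.1) ((lexComp_bot_adj a b).mp he)
      exact ⟨Nat.le_add_left 1 _,
        (blockColor_le_mul h1 (a.2 + b.2).isLt).trans (Nat.mul_le_mul_right n ht)⟩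
  · intro k hk hkt
    have hn : 0 < n := Nat.pos_of_ne_zero (by rintro rfl; omega)
    obtain ⟨e, he, hce⟩ := hsurj (blockIndex n k) (Nat.le_add_left 1 _)
      (blockIndex_le_of_le_mul hk hkt)
    induction e using Sym2.ind with
    | _ u v =>
      obtain ⟨w, huw, rfl⟩ := (specS_blowUp hpos u ⟨0, hn⟩).mpr ⟨hk, v, he, hce⟩
      exact ⟨_, huw, rfl⟩
  · rintro ⟨u, i⟩ a ha b hb k hak hkb
    rw [specS_blowUp hpos] at ha hb ⊢
    exact ⟨ha.1.trans hak, hint u _ ha.2 _ hb.2 _ (blockIndex_mono hak) (blockIndex_mono hkb)⟩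

end BlowUp

theorem stmt6_general {V : Type*} (G : SimpleGraph V) (n : ℕ)
    (hG : IntColorable G) :
    IntColorable (lexComp G (⊥ : SimpleGraph (Fin n))) ∧
      ∀ t c, IsIntCol G c t →
        ∃ c', IsIntCol (lexComp G (⊥ : SimpleGraph (Fin n))) c' (t * n) := by
  obtain ⟨t, c, hc⟩ := hG
  exact ⟨⟨t * n, blowUp n c, hc.blowUp⟩, fun _ c hc => ⟨blowUp n c, hc.blowUp⟩⟩

/-- If G is interval colorable, so is G[∅ₙ]; moreover an interval t-coloring of
G yields an interval (t·n)-coloring of G[∅ₙ]. -/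
theorem stmt6 {V : Type*} (G : SimpleGraph V) (n : ℕ) (hn : 0 < n)
    (hG : IntColorable G) :
    IntColorable (lexComp G (⊥ : SimpleGraph (Fin n))) ∧
      ∀ t c, IsIntCol G c t →
        ∃ c', IsIntCol (lexComp G (⊥ : SimpleGraph (Fin n))) c' (t * n) :=
  stmt6_general G n hG
end

section
/- Every tree T on at least 2 vertices admits an interval coloring α such that the multiset of largest incident colors {max S(v,α) : v ∈ V(T)}, sorted nondecreasingly, is continuous (contains every integer between its minimum and maximum). -/
open SimpleGraph

/-!
Root the tree at `r`, number the children of every vertex `1, …, k`, and give each vertex the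
weight `w r = 0`, `w v = w (parent v) + (rank of v among its siblings)`. Colouring every edge by
the weight of its child endpoint (the larger of its two weights) is an interval colouring: the colours at `v` are `w v` (its
parent edge, if `v ≠ r`) and `w v + 1, …, w v + k`. So the smallest colour at a non-root vertex
is its weight, and the weights of the non-root vertices fill `[1, W]`, since a vertex of weight
`m ≥ 2` has its parent or its preceding sibling at weight `m - 1`. The reversed colouring
`c ↦ W + 1 - c` is again an interval colouring and turns these minima into the maxima.
-/

open Finset

section IntervalColoring

variable {V : Type*} {G : SimpleGraph V} {c : Sym2 V → ℕ} {t : ℕ}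

theorem IsIntCol.reverse (h : IsIntCol G c t) : IsIntCol G (fun e => t + 1 - c e) t := by
  obtain ⟨hproper, hrange, hsurj, hinterval⟩ := h
  have hbound {v u : V} (h : G.Adj v u) : 1 ≤ c s(v, u) ∧ c s(v, u) ≤ t := hrange _ h
  refine ⟨?_, ?_, ?_, ?_⟩
  · intro v a b ha hb hab
    dsimp only
    have := hproper v a b ha hb hab
    have := hbound ha
    have := hbound hb
    omega
  · intro e he
    dsimp only
    have := hrange e he
    omega
  · intro k hk1 hkt
    obtain ⟨e, he, hck⟩ := hsurj (t + 1 - k) (by omega) (by omega)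
    exact ⟨e, he, by dsimp only; omega⟩
  · rintro v _ ⟨a, ha, rfl⟩ _ ⟨b, hb, rfl⟩ k hak hkb
    dsimp only at hak hkb
    have := hbound ha
    have := hbound hb
    obtain ⟨u, hu, hcu⟩ :=
      hinterval v _ ⟨b, hb, rfl⟩ _ ⟨a, ha, rfl⟩ (t + 1 - k) (by omega) (by omega)
    have := hbound hu
    exact ⟨u, hu, by dsimp only; omega⟩

theorem IsIntCol.specS_subset (h : IsIntCol G c t) (v : V) : specS G c v ⊆ Set.Icc 1 t := by
  rintro _ ⟨u, hu, rfl⟩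
  exact h.2.1 _ hu

theorem SimpleGraph.Preconnected.specS_nonempty [Nontrivial V] (hG : G.Preconnected)
    (c : Sym2 V → ℕ) (v : V) : (specS G c v).Nonempty :=
  let ⟨u, hu⟩ := hG.exists_adj_of_nontrivial v
  ⟨_, u, hu, rfl⟩

theorem sSup_specS_const_tsub {v : V} (hv : (specS G c v).Nonempty) :
    sSup (specS G (fun e => t + 1 - c e) v) = t + 1 - sInf (specS G c v) := by
  obtain ⟨u, hu, hcu⟩ := Nat.sInf_mem hv
  refine IsGreatest.csSup_eq ⟨⟨u, hu, by dsimp only; rw [hcu]⟩, ?_⟩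
  rintro _ ⟨x, hx, rfl⟩
  dsimp only
  have : sInf (specS G c v) ≤ c s(v, x) := Nat.sInf_le ⟨x, hx, rfl⟩
  omega

theorem maxSpecSet_const_tsub (hG : ∀ v, (specS G c v).Nonempty) :
    maxSpecSet G (fun e => t + 1 - c e) = (t + 1 - ·) '' Set.range fun v => sInf (specS G c v) := by
  ext k
  simp [maxSpecSet, sSup_specS_const_tsub (hG _)]

theorem maxSpecContinuous_of_maxSpecSet_eq_Icc {a b : ℕ} (h : maxSpecSet G c = Set.Icc a b)
    (hab : a ≤ b) : MaxSpecContinuous G c := by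
  intro k hak hkb
  rw [h, csInf_Icc hab] at hak
  rw [h, csSup_Icc hab] at hkb
  exact h ▸ ⟨hak, hkb⟩

end IntervalColoring

theorem Nat.image_const_tsub_Icc_one (t : ℕ) : (t + 1 - ·) '' Set.Icc 1 t = Set.Icc 1 t := by
  ext k
  refine ⟨?_, fun hk => ⟨t + 1 - k, ?_, ?_⟩⟩
  · rintro ⟨j, hj, rfl⟩
    simp only [Set.mem_Icc] at hj ⊢
    omega
  all_goals simp only [Set.mem_Icc] at hk ⊢; omega

theorem Nat.Icc_one_subset_of_pred_mem {S : Set ℕ} {n : ℕ} (hn : n ∈ S)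
    (hS : ∀ m ∈ S, 2 ≤ m → m - 1 ∈ S) : Set.Icc 1 n ⊆ S := by
  rintro k ⟨hk, hkn⟩
  induction hkn using Nat.decreasingInduction with
  | self => exact hn
  | of_succ j _ ih => simpa using hS _ (ih (by omega)) (by omega)

theorem Finset.exists_bijOn_Icc_one {α : Type*} (s : Finset α) :
    ∃ f : α → ℕ, Set.BijOn f s (Set.Icc 1 #s) :=
  s.finite_toSet.exists_bijOn_of_encard_eq <| by
    rw [← Finset.coe_Icc, Set.encard_coe_eq_coe_finsetCard, Set.encard_coe_eq_coe_finsetCard,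
      Nat.card_Icc, Nat.add_sub_cancel]

namespace SimpleGraph

variable {V : Type*} {T : SimpleGraph V}

theorem Connected.exists_adj_dist_add_one (hT : T.Connected) (r : V) {v : V} (hv : v ≠ r) :
    ∃ u, T.Adj u v ∧ T.dist r u + 1 = T.dist r v := by
  obtain ⟨p, hp⟩ := hT.exists_walk_length_eq_dist r v
  have hnil : ¬ p.Nil := Walk.not_nil_of_ne hv.symm
  have hadj := p.adj_penultimate hnil
  refine ⟨p.penultimate, hadj, ?_⟩
  have hle : T.dist r p.penultimate ≤ p.length - 1 := p.length_dropLast ▸ dist_le p.dropLast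
  have hge : T.dist r v ≤ T.dist r p.penultimate + 1 :=
    (hT.dist_triangle).trans (by rw [dist_eq_one_iff_adj.2 hadj])
  have hpos : 0 < p.length := Walk.not_nil_iff_lt_length.1 hnil
  omega

theorem IsTree.eq_of_adj_of_dist_add_one (hT : T.IsTree) (r : V) {u u' v : V}
    (hu : T.Adj u v) (hu' : T.Adj u' v) (hd : T.dist r u + 1 = T.dist r v)
    (hd' : T.dist r u' + 1 = T.dist r v) : u = u' := by
  obtain ⟨p, hp⟩ := hT.connected.exists_walk_length_eq_dist r u
  obtain ⟨q, hq⟩ := hT.connected.exists_walk_length_eq_dist r u'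
  have hP : (p.concat hu).IsPath := Walk.isPath_of_length_eq_dist _ (by simp [hp, hd])
  have hQ : (q.concat hu').IsPath := Walk.isPath_of_length_eq_dist _ (by simp [hq, hd'])
  have := (hT.isAcyclic.subsingleton_path r v).elim ⟨_, hP⟩ ⟨_, hQ⟩
  exact (Walk.concat_inj (congrArg Subtype.val this)).1

namespace IsTree

variable [DecidableEq V] (hT : T.IsTree) (r : V)

noncomputable def parent (v : V) : V :=
  if h : v = r then r else (hT.connected.exists_adj_dist_add_one r h).choose

variable {hT r}

theorem parent_adj {v : V} (hv : v ≠ r) : T.Adj (hT.parent r v) v := by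
  rw [parent, dif_neg hv]
  exact (hT.connected.exists_adj_dist_add_one r hv).choose_spec.1

theorem dist_parent {v : V} (hv : v ≠ r) : T.dist r (hT.parent r v) + 1 = T.dist r v := by
  rw [parent, dif_neg hv]
  exact (hT.connected.exists_adj_dist_add_one r hv).choose_spec.2

theorem parent_eq_of_adj {u v : V} (h : T.Adj u v) (hd : T.dist r u + 1 = T.dist r v) :
    v ≠ r ∧ hT.parent r v = u := by
  have hv : v ≠ r := by
    rintro rfl
    simp at hd
  exact ⟨hv, hT.eq_of_adj_of_dist_add_one r (parent_adj hv) h (dist_parent hv) hd⟩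

theorem parent_eq_or_parent_eq_of_adj {u v : V} (h : T.Adj u v) :
    (v ≠ r ∧ hT.parent r v = u) ∨ (u ≠ r ∧ hT.parent r u = v) := by
  rcases hT.dist_eq_dist_add_one_of_adj r h with hd | hd
  · exact .inr (parent_eq_of_adj h.symm hd.symm)
  · exact .inl (parent_eq_of_adj h hd.symm)

variable (hT r) [Fintype V]

noncomputable def children (u : V) : Finset V :=
  univ.filter fun v => v ≠ r ∧ hT.parent r v = u

noncomputable def childRank (u : V) : V → ℕ :=
  (hT.children r u).exists_bijOn_Icc_one.choose

noncomputable def weight (v : V) : ℕ :=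
  if v = r then 0 else weight (hT.parent r v) + hT.childRank r (hT.parent r v) v
termination_by T.dist r v
decreasing_by have := dist_parent (hT := hT) ‹v ≠ r›; omega

variable {hT r}

theorem mem_children {u v : V} : v ∈ hT.children r u ↔ v ≠ r ∧ hT.parent r v = u := by
  simp [children]

theorem childRank_bijOn (u : V) :
    Set.BijOn (hT.childRank r u) (hT.children r u) (Set.Icc 1 #(hT.children r u)) :=
  (hT.children r u).exists_bijOn_Icc_one.choose_spec

theorem weight_root : hT.weight r r = 0 := by
  rw [weight, if_pos rfl]

theorem weight_of_mem_children {u v : V} (hv : v ∈ hT.children r u) :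
    hT.weight r v = hT.weight r u + hT.childRank r u v := by
  obtain ⟨hvr, rfl⟩ := mem_children.1 hv
  rw [weight, if_neg hvr]

theorem mem_children_parent {v : V} (hv : v ≠ r) : v ∈ hT.children r (hT.parent r v) :=
  mem_children.2 ⟨hv, rfl⟩

variable (hT r) in
theorem adj_iff {u v : V} : T.Adj v u ↔ (v ≠ r ∧ hT.parent r v = u) ∨ u ∈ hT.children r v := by
  rw [mem_children]
  refine ⟨fun h => (parent_eq_or_parent_eq_of_adj h).symm, ?_⟩
  rintro (⟨hv, rfl⟩ | ⟨hu, rfl⟩)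
  · exact (parent_adj hv).symm
  · exact parent_adj hu

theorem weight_lt_of_mem_children {u v : V} (hv : v ∈ hT.children r u) :
    hT.weight r u < hT.weight r v := by
  rw [weight_of_mem_children hv]
  exact Nat.lt_add_of_pos_right ((childRank_bijOn u).mapsTo hv).1

theorem one_le_weight {v : V} (hv : v ≠ r) : 1 ≤ hT.weight r v :=
  Nat.one_le_of_lt (weight_lt_of_mem_children (mem_children_parent hv))

theorem weight_injOn_children (u : V) : Set.InjOn (hT.weight r) (hT.children r u) := by
  intro a ha b hb h
  rw [weight_of_mem_children ha, weight_of_mem_children hb] at h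
  exact (childRank_bijOn u).injOn ha hb (Nat.add_left_cancel h)

theorem image_weight_children (u : V) :
    hT.weight r '' hT.children r u =
      Set.Icc (hT.weight r u + 1) (hT.weight r u + #(hT.children r u)) := by
  rw [← Set.image_const_add_Icc, ← (childRank_bijOn u).image_eq, Set.image_image]
  exact Set.image_congr fun v hv => weight_of_mem_children hv

theorem exists_weight_eq_sub_one {v : V} (hv : v ≠ r) (h2 : 2 ≤ hT.weight r v) :
    ∃ u ≠ r, hT.weight r u = hT.weight r v - 1 := by
  set p := hT.parent r v
  have hmem : v ∈ hT.children r p := mem_children_parent hv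
  have hw := weight_of_mem_children hmem
  obtain ⟨hi1, hi2⟩ := (childRank_bijOn p).mapsTo hmem
  by_cases hi : hT.childRank r p v = 1
  · refine ⟨p, ?_, by omega⟩
    intro hpr
    rw [hpr, weight_root] at hw
    rw [hpr] at hi
    omega
  · obtain ⟨y, hy, hyi⟩ := (childRank_bijOn p).surjOn
      (show hT.childRank r p v - 1 ∈ Set.Icc 1 #(hT.children r p) from ⟨by omega, by omega⟩)
    refine ⟨y, (mem_children.1 hy).1, ?_⟩
    rw [weight_of_mem_children hy, hyi]
    omega

variable (hT r) in
noncomputable def maxWeight : ℕ := univ.sup (hT.weight r)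

theorem weight_le_maxWeight (v : V) : hT.weight r v ≤ hT.maxWeight r :=
  le_sup (mem_univ v)

theorem exists_weight_eq {k : ℕ} (hk : k ∈ Set.Icc 1 (hT.maxWeight r)) :
    ∃ v ≠ r, hT.weight r v = k := by
  refine Nat.Icc_one_subset_of_pred_mem (S := {m | ∃ v ≠ r, hT.weight r v = m}) ?_ ?_ hk
  · obtain ⟨v, -, hv⟩ := exists_mem_eq_sup univ ⟨r, mem_univ r⟩ (hT.weight r)
    refine ⟨v, ?_, hv.symm⟩
    intro hvr
    have h1 : 1 ≤ hT.maxWeight r := hk.1.trans hk.2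
    rw [maxWeight, hv, hvr, weight_root] at h1
    omega
  · rintro m ⟨v, hv, rfl⟩ hm
    exact exists_weight_eq_sub_one hv hm

variable (hT r) in
noncomputable def edgeWeight : Sym2 V → ℕ :=
  Sym2.lift ⟨fun a b => max (hT.weight r a) (hT.weight r b), fun _ _ => max_comm _ _⟩

theorem edgeWeight_parent {v : V} (hv : v ≠ r) :
    hT.edgeWeight r s(v, hT.parent r v) = hT.weight r v :=
  max_eq_left (weight_lt_of_mem_children (mem_children_parent hv)).le

theorem edgeWeight_child {u v : V} (hv : v ∈ hT.children r u) :
    hT.edgeWeight r s(u, v) = hT.weight r v :=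
  max_eq_right (weight_lt_of_mem_children hv).le

theorem specS_edgeWeight (v : V) :
    specS T (hT.edgeWeight r) v =
      {k | v ≠ r ∧ k = hT.weight r v} ∪ hT.weight r '' hT.children r v := by
  ext k
  constructor
  · rintro ⟨u, hu, rfl⟩
    rcases (hT.adj_iff r).1 hu with ⟨hv, rfl⟩ | hu
    · exact .inl ⟨hv, edgeWeight_parent hv⟩
    · exact .inr ⟨u, hu, (edgeWeight_child hu).symm⟩
  · rintro (⟨hv, rfl⟩ | ⟨u, hu, rfl⟩)
    · exact ⟨_, (hT.adj_iff r).2 (.inl ⟨hv, rfl⟩), edgeWeight_parent hv⟩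
    · exact ⟨u, (hT.adj_iff r).2 (.inr hu), edgeWeight_child hu⟩

theorem specS_edgeWeight_of_ne {v : V} (hv : v ≠ r) :
    specS T (hT.edgeWeight r) v =
      Set.Icc (hT.weight r v) (hT.weight r v + #(hT.children r v)) := by
  rw [specS_edgeWeight, image_weight_children]
  ext k
  simp only [Set.mem_union, Set.mem_ofPred_eq, Set.mem_Icc, hv, ne_eq, not_false_eq_true, true_and]
  omega

theorem specS_edgeWeight_root :
    specS T (hT.edgeWeight r) r = Set.Icc 1 #(hT.children r r) := by
  rw [specS_edgeWeight, image_weight_children, weight_root]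
  simp

theorem eProper_edgeWeight : EProper T (hT.edgeWeight r) := by
  intro v a b ha hb hab heq
  rcases (hT.adj_iff r).1 ha with ⟨hv, rfl⟩ | ha <;> rcases (hT.adj_iff r).1 hb with ⟨hv, rfl⟩ | hb
  · exact hab rfl
  · rw [edgeWeight_parent hv, edgeWeight_child hb] at heq
    exact (weight_lt_of_mem_children hb).ne' heq.symm
  · rw [edgeWeight_child ha, edgeWeight_parent hv] at heq
    exact (weight_lt_of_mem_children ha).ne' heq
  · rw [edgeWeight_child ha, edgeWeight_child hb] at heq
    exact hab (weight_injOn_children v ha hb heq)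

variable (hT r) in
theorem isIntCol_edgeWeight : IsIntCol T (hT.edgeWeight r) (hT.maxWeight r) := by
  refine ⟨eProper_edgeWeight, ?_, ?_, ?_⟩
  · intro e he
    induction e using Sym2.ind with | h a b => ?_
    rcases (hT.adj_iff r).1 ((mem_edgeSet T).1 he) with ⟨ha, rfl⟩ | hb
    · rw [edgeWeight_parent ha]
      exact ⟨one_le_weight ha, weight_le_maxWeight a⟩
    · rw [edgeWeight_child hb]
      exact ⟨one_le_weight (mem_children.1 hb).1, weight_le_maxWeight b⟩
  · intro k hk1 hk2
    obtain ⟨v, hv, rfl⟩ := exists_weight_eq ⟨hk1, hk2⟩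
    exact ⟨_, (hT.adj_iff r).2 (.inl ⟨hv, rfl⟩), edgeWeight_parent hv⟩
  · intro v a ha b hb k hak hkb
    by_cases hv : v = r
    · subst hv
      rw [specS_edgeWeight_root] at *
      exact ⟨ha.1.trans hak, hkb.trans hb.2⟩
    · rw [specS_edgeWeight_of_ne hv] at *
      exact ⟨ha.1.trans hak, hkb.trans hb.2⟩

theorem range_sInf_specS_edgeWeight (hG : ∀ v, (specS T (hT.edgeWeight r) v).Nonempty) :
    (Set.range fun v => sInf (specS T (hT.edgeWeight r) v)) = Set.Icc 1 (hT.maxWeight r) := by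
  ext m
  constructor
  · rintro ⟨v, rfl⟩
    exact (hT.isIntCol_edgeWeight r).specS_subset v (Nat.sInf_mem (hG v))
  · intro hm
    obtain ⟨v, hv, rfl⟩ := exists_weight_eq hm
    exact ⟨v, by dsimp only; rw [specS_edgeWeight_of_ne hv, csInf_Icc (Nat.le_add_right _ _)]⟩

end IsTree

end SimpleGraph

/-- Every tree on at least 2 vertices admits an interval coloring whose sorted
sequence of largest incident colors is continuous. -/
theorem stmt13 {V : Type*} [Fintype V] (T : SimpleGraph V) (hT : T.IsTree)
    (h2 : 2 ≤ Fintype.card V) :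
    ∃ t α, IsIntCol T α t ∧ MaxSpecContinuous T α := by
  classical
  have : Nontrivial V := Fintype.one_lt_card_iff_nontrivial.1 h2
  obtain ⟨r⟩ : Nonempty V := inferInstance
  have hcol := hT.isIntCol_edgeWeight r
  have hG := hT.connected.preconnected.specS_nonempty (hT.edgeWeight r)
  obtain ⟨k, hk⟩ := hG r
  refine ⟨hT.maxWeight r, _, hcol.reverse, maxSpecContinuous_of_maxSpecSet_eq_Icc ?_
    ((hcol.specS_subset r hk).1.trans (hcol.specS_subset r hk).2)⟩
  rw [maxSpecSet_const_tsub hG, hT.range_sInf_specS_edgeWeight hG, Nat.image_const_tsub_Icc_one]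
end

section
/- For every integer n ≥ 2 and every interval coloring α of the complete tripartite graph K_{1,1,2n}, the sorted sequence of largest incident colors (max S(v,α) for v ∈ V(K_{1,1,2n})) is not continuous, i.e., it misses some integer between its minimum and maximum. -/
open SimpleGraph

/-- The part of a vertex of K_{1,1,2n}. -/
def part3 (n : ℕ) : Fin 1 ⊕ Fin 1 ⊕ Fin (2 * n) → Fin 3 :=
  Sum.elim (fun _ => 0) (Sum.elim (fun _ => 1) (fun _ => 2))

/-- The complete tripartite graph K_{1,1,2n}. -/
def tripartite (n : ℕ) : SimpleGraph (Fin 1 ⊕ Fin 1 ⊕ Fin (2 * n)) where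
  Adj a b := part3 n a ≠ part3 n b
  symm := ⟨fun _ _ h => h.symm⟩
  loopless := ⟨fun _ h => h rfl⟩

/-!
Write `u`, `w` for the two singleton vertices, `v i` for the others, `e` for the colour of `uw`,
and `f i`, `g i` for the colours of `u (v i)`, `w (v i)`. The spectra of `u` and `w` are
intervals of `2n + 1` colours, `[a, a + 2n]` and `[b, b + 2n]`, both containing `e`. Each `v i`
has degree two, so `f i` and `g i` are consecutive; hence `∑ g - ∑ f` has absolute value at
most `2n`, while the interval sums differ by `(2n + 1)(b - a)`. So `a = b`, and `f`, `g` both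
enumerate `[a, a + 2n] \ {e}`.

The largest colours are `a + 2n` at `u`, `w` and `max (f i) (g i)` at `v i`, all in that set.
If `e` is interior, it lies strictly between the largest colours `a + 1` (the top of the pair
through the least colour `a`) and `a + 2n`, and is missed. If `e` is an endpoint, let `m` be
the least colour of the set: it is paired with `m + 1` once through `f` and once through `g`,
which uses up both occurrences of `m + 1`, so no `v i` has largest colour `m + 2 < a + 2n`.
-/

open Finset Function

lemma Finset.eq_Icc_of_card_eq {S : Finset ℕ}
    (hS : ∀ x ∈ S, ∀ y ∈ S, ∀ k, x ≤ k → k ≤ y → k ∈ S) {k : ℕ} (hcard : S.card = k + 1) :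
    ∃ a, S = Icc a (a + k) := by
  have hne : S.Nonempty := card_pos.mp (by omega)
  have hIcc : S = Icc (S.min' hne) (S.max' hne) := by
    ext x
    refine ⟨fun hx => mem_Icc.mpr ⟨min'_le S x hx, le_max' S x hx⟩, fun hx => ?_⟩
    rw [mem_Icc] at hx
    exact hS _ (min'_mem S hne) _ (max'_mem S hne) x hx.1 hx.2
  refine ⟨S.min' hne, ?_⟩
  have := hIcc ▸ hcard
  rw [Nat.card_Icc] at this
  rwa [show S.min' hne + k = S.max' hne by omega]

lemma Finset.sum_Icc_add_eq (a k : ℕ) :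
    ∑ x ∈ Icc a (a + k), x = (k + 1) * a + ∑ j ∈ Icc 0 k, j := by
  have hshift := map_add_left_Icc 0 k a
  rw [add_zero] at hshift
  rw [← hshift, sum_map]
  simp only [addLeftEmbedding_apply]
  rw [sum_add_distrib, sum_const, Nat.card_Icc, smul_eq_mul, Nat.sub_zero]

lemma mem_range_iff_of_insert_range_eq_Icc {ι : Type*} {f : ι → ℕ} {c a b : ℕ}
    (hc : c ∉ Set.range f) (h : insert c (Set.range f) = Set.Icc a b) (x : ℕ) :
    x ∈ Set.range f ↔ x ≠ c ∧ a ≤ x ∧ x ≤ b := by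
  rw [← Set.mem_Icc, ← h, Set.mem_insert_iff]
  exact ⟨fun hx => ⟨fun hxc => hc (hxc ▸ hx), Or.inr hx⟩, fun ⟨hxc, hx⟩ => hx.resolve_left hxc⟩

section ConsecutivePairs

variable {ι : Type*} {f g : ι → ℕ}

lemma le_of_insert_range_eq_Icc [Fintype ι] (hf : Injective f) (hg : Injective g)
    (hgf : ∀ i, g i ≤ f i + 1) {c a b : ℕ} (hcf : c ∉ Set.range f) (hcg : c ∉ Set.range g)
    (ha : insert c (Set.range f) = Set.Icc a (a + Fintype.card ι))
    (hb : insert c (Set.range g) = Set.Icc b (b + Fintype.card ι)) : b ≤ a := by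
  have hsum : ∀ {h : ι → ℕ} {d : ℕ}, Injective h → c ∉ Set.range h →
      insert c (Set.range h) = Set.Icc d (d + Fintype.card ι) →
      c + ∑ i, h i = (Fintype.card ι + 1) * d + ∑ j ∈ Icc 0 (Fintype.card ι), j := by
    intro h d hh hch hd
    have hfin : insert c (univ.image h) = Icc d (d + Fintype.card ι) :=
      coe_injective (by simpa using hd)
    rw [← sum_Icc_add_eq, ← hfin, sum_insert (by simpa using hch),
      sum_image fun i _ j _ hij => hh hij]
  have hsf := hsum hf hcf ha
  have hsg := hsum hg hcg hb
  have hle : ∑ i, g i ≤ ∑ i, f i + Fintype.card ι := by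
    simpa [sum_add_distrib] using sum_le_sum fun i (_ : i ∈ univ) => hgf i
  have : (Fintype.card ι + 1) * b < (Fintype.card ι + 1) * (a + 1) := by
    rw [mul_add_one]; omega
  exact Nat.lt_add_one_iff.mp (Nat.lt_of_mul_lt_mul_left this)

lemma exists_max_eq_add_one_and_forall_max_ne_add_two (hf : Injective f) (hg : Injective g)
    (hfg : Set.range f = Set.range g) (hadj : ∀ i, f i = g i + 1 ∨ g i = f i + 1) {m : ℕ}
    (hm : m ∈ Set.range f) (hmin : ∀ i, m ≤ f i) :
    (∃ i, max (f i) (g i) = m + 1) ∧ ∀ k, max (f k) (g k) ≠ m + 2 := by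
  have hming : ∀ i, m ≤ g i := fun i => by
    obtain ⟨j, hj⟩ : g i ∈ Set.range f := hfg ▸ Set.mem_range_self i
    exact hj ▸ hmin j
  obtain ⟨i, hi⟩ := hm
  obtain ⟨j, hj⟩ : m ∈ Set.range g := hfg ▸ ⟨i, hi⟩
  have hgi : g i = m + 1 := by have := hadj i; have := hming i; omega
  have hfj : f j = m + 1 := by have := hadj j; have := hmin j; omega
  refine ⟨⟨i, by omega⟩, fun k hk => ?_⟩
  rcases hadj k with hkf | hkg
  · have : g k = g i := by omega
    have := hg this ▸ hk
    omega
  · have : f k = f j := by omega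
    have := hf this ▸ hk
    omega

lemma exists_gap_of_insert_range_eq_Icc (hf : Injective f) (hg : Injective g)
    (hadj : ∀ i, f i = g i + 1 ∨ g i = f i + 1) {a c n : ℕ} (hn : 2 ≤ n)
    (hcf : c ∉ Set.range f) (hcg : c ∉ Set.range g)
    (hrf : insert c (Set.range f) = Set.Icc a (a + 2 * n))
    (hrg : insert c (Set.range g) = Set.Icc a (a + 2 * n)) :
    ∃ k, (∃ i, max (f i) (g i) ≤ k) ∧ k < a + 2 * n ∧ ∀ i, max (f i) (g i) ≠ k := by
  have hc : a ≤ c ∧ c ≤ a + 2 * n := Set.mem_Icc.mp (hrf ▸ Set.mem_insert c _)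
  have hrf := mem_range_iff_of_insert_range_eq_Icc hcf hrf
  have hrg := mem_range_iff_of_insert_range_eq_Icc hcg hrg
  have hfg : Set.range f = Set.range g := Set.ext fun x => (hrf x).trans (hrg x).symm
  have hmin : ∀ m, (∀ x, x ∈ Set.range f → m ≤ x) → ∀ i, m ≤ f i :=
    fun m h i => h _ (Set.mem_range_self i)
  by_cases hend : c = a ∨ c = a + 2 * n
  · obtain ⟨m, hm, hmle, hlt⟩ : ∃ m, m ∈ Set.range f ∧ (∀ x, x ∈ Set.range f → m ≤ x) ∧
        m + 2 < a + 2 * n := by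
      rcases hend with rfl | rfl
      · exact ⟨c + 1, (hrf _).2 (by omega), fun x hx => by have := (hrf x).1 hx; omega, by omega⟩
      · exact ⟨a, (hrf _).2 (by omega), fun x hx => by have := (hrf x).1 hx; omega, by omega⟩
    obtain ⟨⟨i, hi⟩, hgap⟩ :=
      exists_max_eq_add_one_and_forall_max_ne_add_two hf hg hfg hadj hm (hmin m hmle)
    exact ⟨m + 2, ⟨i, by omega⟩, hlt, hgap⟩
  · have ha : a ∈ Set.range f := (hrf a).2 (by omega)
    obtain ⟨⟨i, hi⟩, -⟩ := exists_max_eq_add_one_and_forall_max_ne_add_two hf hg hfg hadj ha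
      (hmin a fun x hx => ((hrf x).1 hx).2.1)
    refine ⟨c, ⟨i, by omega⟩, by omega, fun j hj => ?_⟩
    rcases max_choice (f j) (g j) with h | h <;> rw [h] at hj
    · exact ((hrf c).1 ⟨j, hj⟩).1 rfl
    · exact ((hrg c).1 ⟨j, hj⟩).1 rfl

end ConsecutivePairs

lemma EProper.injective_comp {V ι : Type*} {G : SimpleGraph V} {c : Sym2 V → ℕ}
    (hc : EProper G c) {x : V} {y : ι → V} (hy : Injective y) (hadj : ∀ i, G.Adj x (y i)) :
    Injective fun i => c s(x, y i) := fun i j hij => by_contra fun hne =>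
  hc x (y i) (y j) (hadj i) (hadj j) (hy.ne hne) hij

section IntervalColoring

variable {V : Type*} {G : SimpleGraph V} {c : Sym2 V → ℕ} {t : ℕ}

lemma IsIntCol.eq_add_one_or_of_specS_eq_pair (hc : IsIntCol G c t) {x : V} {p q : ℕ}
    (hx : specS G c x = {p, q}) (hpq : p ≠ q) : p = q + 1 ∨ q = p + 1 := by
  have hp : p ∈ specS G c x := hx ▸ Set.mem_insert p {q}
  have hq : q ∈ specS G c x := hx ▸ Set.mem_insert_of_mem p rfl
  by_contra! hfar
  rcases Nat.lt_or_gt_of_ne hpq with hlt | hlt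
  · have := hx ▸ hc.2.2.2 x p hp q hq (p + 1) (by omega) (by omega)
    rcases this with h | h <;> simp_all
  · have := hx ▸ hc.2.2.2 x q hq p hp (q + 1) (by omega) (by omega)
    rcases this with h | h <;> simp_all

lemma IsIntCol.exists_specS_eq_Icc {ι : Type*} [Fintype ι] (hc : IsIntCol G c t) {x : V}
    {e : ℕ} {f : ι → ℕ} (hx : specS G c x = insert e (Set.range f)) (hf : Injective f)
    (he : e ∉ Set.range f) : ∃ a, specS G c x = Set.Icc a (a + Fintype.card ι) := by
  have hS : specS G c x = ↑(insert e (univ.image f)) := by simp [hx]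
  obtain ⟨a, ha⟩ : ∃ a, insert e (univ.image f) = Icc a (a + Fintype.card ι) := by
    refine Finset.eq_Icc_of_card_eq (fun p hp q hq => ?_) ?_
    · simpa [hS] using hc.2.2.2 x p (hS ▸ hp) q (hS ▸ hq)
    · rw [card_insert_of_notMem (by simpa using he), card_image_of_injective _ hf, card_univ]
  exact ⟨a, by rw [hS, ha, coe_Icc]⟩

end IntervalColoring

lemma not_maxSpecContinuous_of_gap {V : Type*} [Finite V] {G : SimpleGraph V}
    {c : Sym2 V → ℕ} {k : ℕ} {v₁ v₂ : V} (h₁ : sSup (specS G c v₁) ≤ k)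
    (h₂ : k ≤ sSup (specS G c v₂)) (hk : ∀ v, sSup (specS G c v) ≠ k) :
    ¬ MaxSpecContinuous G c := by
  intro hcont
  have hfin : (maxSpecSet G c).Finite := Set.finite_range fun v => sSup (specS G c v)
  obtain ⟨v, hv⟩ := hcont k (csInf_le_of_le (OrderBot.bddBelow _) ⟨v₁, rfl⟩ h₁)
    (le_csSup_of_le hfin.bddAbove ⟨v₂, rfl⟩ h₂)
  exact hk v hv

namespace tripartite

variable {n : ℕ}

def u : Fin 1 ⊕ Fin 1 ⊕ Fin (2 * n) := Sum.inl 0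

def w : Fin 1 ⊕ Fin 1 ⊕ Fin (2 * n) := Sum.inr (Sum.inl 0)

def v (i : Fin (2 * n)) : Fin 1 ⊕ Fin 1 ⊕ Fin (2 * n) := Sum.inr (Sum.inr i)

lemma v_injective : Injective (v (n := n)) := fun _ _ h => by simpa [v] using h

lemma adj_u_w : (tripartite n).Adj u w := by simp [tripartite, part3, u, w]

lemma adj_u_v (i : Fin (2 * n)) : (tripartite n).Adj u (v i) := by
  simp [tripartite, part3, u, v]

lemma adj_w_v (i : Fin (2 * n)) : (tripartite n).Adj w (v i) := by
  simp [tripartite, part3, w, v]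

lemma eq_u_or_eq_w_or_eq_v (x : Fin 1 ⊕ Fin 1 ⊕ Fin (2 * n)) :
    x = u ∨ x = w ∨ ∃ i, x = v i := by
  rcases x with x | x | i
  · exact Or.inl (congrArg Sum.inl (Subsingleton.elim x 0))
  · exact Or.inr (Or.inl (congrArg (Sum.inr ∘ Sum.inl) (Subsingleton.elim x 0)))
  · exact Or.inr (Or.inr ⟨i, rfl⟩)

variable (c : Sym2 (Fin 1 ⊕ Fin 1 ⊕ Fin (2 * n)) → ℕ)

lemma specS_u :
    specS (tripartite n) c u = insert (c s(u, w)) (Set.range fun i => c s(u, v i)) := by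
  ext k
  simp only [specS, Set.mem_ofPred_eq, Set.mem_insert_iff, Set.mem_range]
  constructor
  · rintro ⟨x, hx, rfl⟩
    rcases eq_u_or_eq_w_or_eq_v x with rfl | rfl | ⟨i, rfl⟩
    · exact absurd hx ((tripartite n).loopless.irrefl _)
    · exact Or.inl rfl
    · exact Or.inr ⟨i, rfl⟩
  · rintro (rfl | ⟨i, rfl⟩)
    · exact ⟨w, adj_u_w, rfl⟩
    · exact ⟨v i, adj_u_v i, rfl⟩

lemma specS_w :
    specS (tripartite n) c w = insert (c s(u, w)) (Set.range fun i => c s(w, v i)) := by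
  ext k
  simp only [specS, Set.mem_ofPred_eq, Set.mem_insert_iff, Set.mem_range]
  constructor
  · rintro ⟨x, hx, rfl⟩
    rcases eq_u_or_eq_w_or_eq_v x with rfl | rfl | ⟨i, rfl⟩
    · exact Or.inl (congrArg c Sym2.eq_swap)
    · exact absurd hx ((tripartite n).loopless.irrefl _)
    · exact Or.inr ⟨i, rfl⟩
  · rintro (rfl | ⟨i, rfl⟩)
    · exact ⟨u, adj_u_w.symm, congrArg c Sym2.eq_swap⟩
    · exact ⟨v i, adj_w_v i, rfl⟩

lemma specS_v (i : Fin (2 * n)) :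
    specS (tripartite n) c (v i) = {c s(u, v i), c s(w, v i)} := by
  ext k
  simp only [specS, Set.mem_ofPred_eq, Set.mem_insert_iff, Set.mem_singleton_iff]
  constructor
  · rintro ⟨x, hx, rfl⟩
    rcases eq_u_or_eq_w_or_eq_v x with rfl | rfl | ⟨j, rfl⟩
    · exact Or.inl (congrArg c Sym2.eq_swap)
    · exact Or.inr (congrArg c Sym2.eq_swap)
    · simp [tripartite, part3, v] at hx
  · rintro (rfl | rfl)
    · exact ⟨u, (adj_u_v i).symm, congrArg c Sym2.eq_swap⟩
    · exact ⟨w, (adj_w_v i).symm, congrArg c Sym2.eq_swap⟩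

variable {c} {t : ℕ}

lemma u_ne_w : (u : Fin 1 ⊕ Fin 1 ⊕ Fin (2 * n)) ≠ w := by simp [u, w]

lemma v_ne_w (i : Fin (2 * n)) : v i ≠ w := by simp [v, w]

lemma v_ne_u (i : Fin (2 * n)) : v i ≠ u := by simp [v, u]

lemma color_u_w_notMem_range_u (hc : EProper (tripartite n) c) :
    c s(u, w) ∉ Set.range fun i => c s(u, v i) := fun ⟨i, hi⟩ =>
  hc u (v i) w (adj_u_v i) adj_u_w (v_ne_w i) hi

lemma color_u_w_notMem_range_w (hc : EProper (tripartite n) c) :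
    c s(u, w) ∉ Set.range fun i => c s(w, v i) := fun ⟨i, hi⟩ => by
  rw [Sym2.eq_swap (a := u)] at hi
  exact hc w (v i) u (adj_w_v i) adj_u_w.symm (v_ne_u i) hi

lemma color_u_v_eq_or (hc : IsIntCol (tripartite n) c t) (i : Fin (2 * n)) :
    c s(u, v i) = c s(w, v i) + 1 ∨ c s(w, v i) = c s(u, v i) + 1 := by
  refine hc.eq_add_one_or_of_specS_eq_pair (specS_v c i) ?_
  rw [Sym2.eq_swap (a := u), Sym2.eq_swap (a := w)]
  exact hc.1 (v i) u w (adj_u_v i).symm (adj_w_v i).symm u_ne_w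

lemma exists_specS_u_eq_Icc_and_specS_w_eq_Icc (hc : IsIntCol (tripartite n) c t) :
    ∃ a, specS (tripartite n) c u = Set.Icc a (a + 2 * n) ∧
      specS (tripartite n) c w = Set.Icc a (a + 2 * n) := by
  have hf := hc.1.injective_comp v_injective adj_u_v
  have hg := hc.1.injective_comp v_injective adj_w_v
  have hcf := color_u_w_notMem_range_u hc.1
  have hcg := color_u_w_notMem_range_w hc.1
  obtain ⟨a, ha⟩ := hc.exists_specS_eq_Icc (specS_u c) hf hcf
  obtain ⟨b, hb⟩ := hc.exists_specS_eq_Icc (specS_w c) hg hcg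
  rw [specS_u] at ha
  rw [specS_w] at hb
  have hba := le_of_insert_range_eq_Icc hf hg
    (fun i => by have := color_u_v_eq_or hc i; omega) hcf hcg ha hb
  have hab := le_of_insert_range_eq_Icc hg hf
    (fun i => by have := color_u_v_eq_or hc i; omega) hcg hcf hb ha
  rw [Fintype.card_fin] at ha hb
  exact ⟨a, by rw [specS_u, ha], by rw [specS_w, hb, le_antisymm hba hab]⟩

end tripartite

/-- For n ≥ 2, no interval coloring of K_{1,1,2n} has a continuous sorted
sequence of largest incident colors. -/
theorem stmt15 (n : ℕ) (hn : 2 ≤ n) :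
    ∀ t c, IsIntCol (tripartite n) c t → ¬ MaxSpecContinuous (tripartite n) c := by
  open tripartite in
  intro t c hc
  obtain ⟨a, hu, hw⟩ := exists_specS_u_eq_Icc_and_specS_w_eq_Icc hc
  obtain ⟨k, ⟨i, hi⟩, hk, hgap⟩ := exists_gap_of_insert_range_eq_Icc
    (hc.1.injective_comp v_injective adj_u_v) (hc.1.injective_comp v_injective adj_w_v)
    (color_u_v_eq_or hc) hn (color_u_w_notMem_range_u hc.1) (color_u_w_notMem_range_w hc.1)
    ((specS_u c).symm.trans hu) ((specS_w c).symm.trans hw)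
  have htop : ∀ {S}, S = Set.Icc a (a + 2 * n) → sSup S = a + 2 * n := fun h =>
    h ▸ csSup_Icc (by omega)
  refine not_maxSpecContinuous_of_gap (k := k) (v₁ := v i) (v₂ := u) ?_ ?_ ?_
  · rwa [specS_v, csSup_pair]
  · rw [htop hu]; exact hk.le
  · intro x
    rcases eq_u_or_eq_w_or_eq_v x with rfl | rfl | ⟨j, rfl⟩
    · rw [htop hu]; omega
    · rw [htop hw]; omega
    · rw [specS_v, csSup_pair]; exact hgap j
end
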